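/- Let G be a real solvable Lie algebra of dimension n ≥ 4 whose derived ideal G¹ = [G,G] is abelian of dimension n − 2, and suppose A_G has dimension 1. Then there exist linearly independent elements Y, Z ∈ G not belonging to G¹ such that a_Y = 0, a_Z ≠ 0, and A_G = span{a_Z}. -/

import Mathlib

open Module

/-- The restriction to a Lie ideal `I` of the adjoint operator `ad X`,
as a linear endomorphism of `I`. -/
noncomputable def adRestrict {G : Type*} [LieRing G] [LieAlgebra ℝ G]
    (I : LieIdeal ℝ G) (X : G) : Module.End ℝ (I : Submodule ℝ G) :=
  (LieAlgebra.ad ℝ G X).restrict fun v hv => I.lie_mem hv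

/-- The span `A_G` of the restricted adjoint operators inside `End(G¹)`. -/
noncomputable def adSpan (G : Type*) [LieRing G] [LieAlgebra ℝ G] :
    Submodule ℝ (Module.End ℝ ((LieAlgebra.derivedSeries ℝ G 1 : LieIdeal ℝ G) : Submodule ℝ G)) :=
  Submodule.span ℝ (Set.range fun X : G => adRestrict (LieAlgebra.derivedSeries ℝ G 1) X)

/-!
The map `X ↦ a_X` is linear, so `A_G` is its range. Its kernel contains the abelian ideal `G¹`,
so rank–nullity with `dim A_G = 1` gives a kernel of dimension `n - 1 > n - 2 = dim G¹`:
any `Y` in the kernel but outside `G¹`, together with any `Z` such that `a_Z ≠ 0`, does the job.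
-/

namespace LinearMap

variable {K V W : Type*} [Field K] [AddCommGroup V] [Module K V] [AddCommGroup W] [Module K W]

theorem exists_mem_ker_notMem_of_finrank_lt [FiniteDimensional K V] {φ : V →ₗ[K] W}
    {I : Submodule K V} (hI : I ≤ ker φ)
    (hlt : finrank K I + finrank K (range φ) < finrank K V) :
    ∃ Y ∈ ker φ, Y ∉ I := by
  have hker : finrank K I < finrank K (ker φ) := by
    have := finrank_range_add_finrank_ker φ
    omega
  exact SetLike.exists_of_lt (lt_of_le_of_ne hI (by rintro rfl; omega))

theorem linearIndependent_pair_of_mem_ker {φ : V →ₗ[K] W} {Y Z : V} (hY : Y ∈ ker φ)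
    (hY0 : Y ≠ 0) (hZ : φ Z ≠ 0) : LinearIndependent K ![Y, Z] :=
  (LinearIndependent.pair_iff' hY0).mpr fun a haYZ =>
    hZ (by rw [← haYZ, map_smul, mem_ker.mp hY, smul_zero])

theorem exists_pair_of_finrank_range_eq_one [FiniteDimensional K V] {φ : V →ₗ[K] W}
    {I : Submodule K V} (hI : I ≤ ker φ) (hrange : finrank K (range φ) = 1)
    (hlt : finrank K I + 1 < finrank K V) :
    ∃ Y Z : V, LinearIndependent K ![Y, Z] ∧ Y ∉ I ∧ Z ∉ I ∧ φ Y = 0 ∧ φ Z ≠ 0 ∧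
      range φ = K ∙ φ Z := by
  obtain ⟨Y, hYker, hYI⟩ := exists_mem_ker_notMem_of_finrank_lt hI (by omega)
  have hne : range φ ≠ ⊥ := fun h => by
    rw [h, finrank_bot] at hrange
    exact zero_ne_one hrange
  obtain ⟨_, ⟨Z, rfl⟩, hZ⟩ := Submodule.exists_mem_ne_zero_of_ne_bot hne
  have hY0 : Y ≠ 0 := fun h => hYI (h ▸ I.zero_mem)
  exact ⟨Y, Z, linearIndependent_pair_of_mem_ker hYker hY0 hZ, hYI, fun h => hZ (hI h),
    hYker, hZ, eq_span_singleton_of_mem_of_finrank_eq_one hrange ⟨Z, rfl⟩ hZ⟩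

end LinearMap

section adRestrict

variable {G : Type*} [LieRing G] [LieAlgebra ℝ G]

noncomputable def adRestrictₗ (I : LieIdeal ℝ G) :
    G →ₗ[ℝ] Module.End ℝ (I : Submodule ℝ G) where
  toFun := adRestrict I
  map_add' X Y := by ext v; exact add_lie X Y (v : G)
  map_smul' c X := by ext v; exact smul_lie c X (v : G)

theorem adSpan_eq_range_adRestrictₗ :
    adSpan G = LinearMap.range (adRestrictₗ (LieAlgebra.derivedSeries ℝ G 1)) := by
  rw [adSpan, ← Submodule.span_eq (LinearMap.range _), LinearMap.coe_range]
  rfl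

theorem le_ker_adRestrictₗ {I : LieIdeal ℝ G}
    (habelian : ∀ u v : G, u ∈ I → v ∈ I → ⁅u, v⁆ = 0) :
    (I : Submodule ℝ G) ≤ LinearMap.ker (adRestrictₗ I) := fun X hX =>
  LinearMap.mem_ker.mpr <| LinearMap.ext fun v => Subtype.ext (habelian X v hX v.2)

end adRestrict

theorem exists_YZ_of_codim_two_abelian_derived_adSpan_dim_one_general
    (G : Type*) [LieRing G] [LieAlgebra ℝ G] [FiniteDimensional ℝ G]
    (n : ℕ) (hn : Module.finrank ℝ G = n) (hn4 : 4 ≤ n)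
    (habelian : ∀ u v : G, u ∈ LieAlgebra.derivedSeries ℝ G 1 →
      v ∈ LieAlgebra.derivedSeries ℝ G 1 → ⁅u, v⁆ = 0)
    (hdim : Module.finrank ℝ (LieAlgebra.derivedSeries ℝ G 1) = n - 2)
    (hA : Module.finrank ℝ (adSpan G) = 1) :
    ∃ Y Z : G, LinearIndependent ℝ ![Y, Z] ∧
      Y ∉ LieAlgebra.derivedSeries ℝ G 1 ∧ Z ∉ LieAlgebra.derivedSeries ℝ G 1 ∧
      adRestrict (LieAlgebra.derivedSeries ℝ G 1) Y = 0 ∧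
      adRestrict (LieAlgebra.derivedSeries ℝ G 1) Z ≠ 0 ∧
      (adSpan G : Submodule ℝ _) =
        Submodule.span ℝ {adRestrict (LieAlgebra.derivedSeries ℝ G 1) Z} := by
  rw [adSpan_eq_range_adRestrictₗ] at hA ⊢
  exact LinearMap.exists_pair_of_finrank_range_eq_one (le_ker_adRestrictₗ habelian) hA
    (by rw [hn]; exact hdim ▸ by omega)

/-- if `G` is a real solvable Lie algebra of dimension `n ≥ 4` whose derived
ideal is abelian of dimension `n - 2` and `dim A_G = 1`, then there are linearly
independent `Y, Z ∉ G¹` with `a_Y = 0`, `a_Z ≠ 0` and `A_G = span {a_Z}`. -/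
theorem exists_YZ_of_codim_two_abelian_derived_adSpan_dim_one
    (G : Type*) [LieRing G] [LieAlgebra ℝ G] [FiniteDimensional ℝ G]
    [LieAlgebra.IsSolvable G] (n : ℕ) (hn : Module.finrank ℝ G = n) (hn4 : 4 ≤ n)
    (habelian : ∀ u v : G, u ∈ LieAlgebra.derivedSeries ℝ G 1 →
      v ∈ LieAlgebra.derivedSeries ℝ G 1 → ⁅u, v⁆ = 0)
    (hdim : Module.finrank ℝ (LieAlgebra.derivedSeries ℝ G 1) = n - 2)
    (hA : Module.finrank ℝ (adSpan G) = 1) :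
    ∃ Y Z : G, LinearIndependent ℝ ![Y, Z] ∧
      Y ∉ LieAlgebra.derivedSeries ℝ G 1 ∧ Z ∉ LieAlgebra.derivedSeries ℝ G 1 ∧
      adRestrict (LieAlgebra.derivedSeries ℝ G 1) Y = 0 ∧
      adRestrict (LieAlgebra.derivedSeries ℝ G 1) Z ≠ 0 ∧
      (adSpan G : Submodule ℝ _) =
        Submodule.span ℝ {adRestrict (LieAlgebra.derivedSeries ℝ G 1) Z} :=
  exists_YZ_of_codim_two_abelian_derived_adSpan_dim_one_general G n hn hn4 habelian hdim hA
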